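/- Let u be a solution of the localized problem on Ω_R × (−1,0) with bound M, where 0 < R < 1/2 satisfies condition (R1) or (R2), and fix constants A > 3, 0 < δ < R/(16A) and 0 < θ_0 < 1/(32A). Then there exists a constant C > 0 such that for every Q_r(x_1,t_1) ⊂ Q_{8Aθ_0δ}: I_r(x_1,t_1) ≤ C ∫_{t_1−(r/2)²}^{t_1−(r/4)²} (t_1−s)^{2/(p−1)} ∫_{Ω_R} |u(x,s)|^{p+1} K_{(x_1,t_1)}(x,s) φ_{x_1,R/8}(x)² dx ds. -/

import Mathlib

open MeasureTheory Filter Set Metric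
open scoped ENNReal RealInnerProductSpace NNReal

noncomputable section

abbrev Euc (n : ℕ) := EuclideanSpace ℝ (Fin n)

/-- The Laplacian of `f` at `x`, as the trace of the second derivative. -/
def lapl {n : ℕ} (f : Euc n → ℝ) (x : Euc n) : ℝ :=
  ∑ i : Fin n,
    iteratedFDeriv ℝ 2 f x ![EuclideanSpace.single i 1, EuclideanSpace.single i 1]

/-- The first `n - 1` coordinates of a point of `ℝ^n`. -/
def frontC {n : ℕ} (x : Euc n) : Euc (n - 1) :=
  WithLp.toLp 2 fun i => x (Fin.castLE (Nat.sub_le n 1) i)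

/-- The last coordinate of a point of `ℝ^n`. -/
def lastC {n : ℕ} (x : Euc n) : ℝ :=
  if h : 0 < n then x ⟨n - 1, Nat.sub_lt h one_pos⟩ else 0

/-- Assembling a point of `ℝ^n` from `(x', x_n)`. -/
def glue {n : ℕ} (y : Euc (n - 1)) (s : ℝ) : Euc n :=
  WithLp.toLp 2 fun j => if h : (j : ℕ) < n - 1 then y ⟨j, h⟩ else s

/-- The Sobolev critical exponent `p_S = (n+2)/(n-2)`. -/
def pS (n : ℕ) : ℝ := (n + 2) / (n - 2)

/-- The scaling critical Lebesgue exponent `q_c = n(p-1)/2`. -/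
def qc (n : ℕ) (p : ℝ) : ℝ := n * (p - 1) / 2

/-- The exponent `q_* = n(p-1)/(p+1)`. -/
def qstar (n : ℕ) (p : ℝ) : ℝ := n * (p - 1) / (p + 1)

/-- A `C^{2+α}` function: twice continuously differentiable with `α`-Hölder continuous
second derivatives. -/
def IsC2Alpha {m : ℕ} (α : ℝ) (f : Euc m → ℝ) : Prop :=
  ContDiff ℝ 2 f ∧
  ∃ C : ℝ, ∀ y z, ‖iteratedFDeriv ℝ 2 f y - iteratedFDeriv ℝ 2 f z‖ ≤ C * ‖y - z‖ ^ α

/-- `Om` is a `C^{2+α}` domain of `ℝ^n`: an open nonempty set which, near each boundary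
point and after a rigid motion, is the region above the graph of a `C^{2+α}` function. -/
def IsC2AlphaDomain {n : ℕ} (α : ℝ) (Om : Set (Euc n)) : Prop :=
  IsOpen Om ∧ Om.Nonempty ∧
  ∀ a ∈ frontier Om, ∃ (g : Euc n ≃ₗᵢ[ℝ] Euc n) (f : Euc (n - 1) → ℝ) (r : ℝ),
    0 < r ∧ IsC2Alpha α f ∧
    ∀ x ∈ ball a r, (x ∈ Om ↔ f (frontC (g (x - a))) < lastC (g (x - a)))

/-- Condition (R1): the closed ball of radius `R` about the origin lies in `Om`. -/
def CondR1 {n : ℕ} (Om : Set (Euc n)) (R : ℝ) : Prop :=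
  closure (ball (0 : Euc n) R) ⊆ Om

/-- Condition (R2): `0 ∈ ∂Om` and near the origin `Om` is the region above the graph of a
compactly supported `C^{2+α}` function `f` with `f(0)=0`, `∇'f(0)=0`, `‖∇'f‖_∞ ≤ 1/2`. -/
def CondR2 {n : ℕ} (Om : Set (Euc n)) (R α : ℝ) (f : Euc (n - 1) → ℝ) : Prop :=
  (0 : Euc n) ∈ frontier Om ∧ HasCompactSupport f ∧ IsC2Alpha α f ∧
  f 0 = 0 ∧ gradient f 0 = 0 ∧ (∀ y, ‖gradient f y‖ ≤ 1 / 2) ∧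
  Om ∩ ball (0 : Euc n) R = {x ∈ ball (0 : Euc n) R | f (frontC x) < lastC x}

/-- `u` is a solution of the localized problem on `Ω_R × (-1,0)` with bound `M`:
it is `C^{2,1}` on `cl(Ω_R) × (-1,0)`, solves `u_t = Δu + |u|^{p-1}u` on `Ω_R × (-1,0)`,
vanishes on `(∂Ω ∩ B_R) × (-1,0)`, and `sup_{-1<t<0} ‖u(·,t)‖_{L^{q_c}(Ω_R)} ≤ M`. -/
def LocSol {n : ℕ} (Om : Set (Euc n)) (p R M : ℝ) (u : Euc n → ℝ → ℝ) : Prop :=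
  (∀ t ∈ Ioo (-1 : ℝ) 0, ContDiffOn ℝ 2 (fun x => u x t) (closure (Om ∩ ball 0 R))) ∧
  (∀ x ∈ closure (Om ∩ ball (0 : Euc n) R), ∀ t ∈ Ioo (-1 : ℝ) 0,
    DifferentiableAt ℝ (fun s => u x s) t) ∧
  (∀ x ∈ Om ∩ ball (0 : Euc n) R, ∀ t ∈ Ioo (-1 : ℝ) 0,
    HasDerivAt (fun s => u x s) (lapl (fun y => u y t) x + |u x t| ^ (p - 1) * u x t) t) ∧
  (∀ x ∈ frontier Om ∩ ball (0 : Euc n) R, ∀ t ∈ Ioo (-1 : ℝ) 0, u x t = 0) ∧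
  (∀ t ∈ Ioo (-1 : ℝ) 0,
    eLpNorm (fun x => u x t) (ENNReal.ofReal (qc n p)) (volume.restrict (Om ∩ ball 0 R))
      ≤ ENNReal.ofReal M)

/-- The fixed cut-off function `φ`. -/
def IsCutoff (φ : ℝ → ℝ) : Prop :=
  ContDiff ℝ (⊤ : ℕ∞) φ ∧ (∀ z : ℝ, 0 ≤ z → z ≤ 1 / 2 → φ z = 1) ∧
  (∀ z : ℝ, 1 / 2 < z → z < 1 → 0 < φ z ∧ φ z < 1) ∧
  (∀ z : ℝ, 1 ≤ z → φ z = 0) ∧ (∀ z : ℝ, 0 ≤ z → deriv φ z ≤ 0)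

/-- The backward heat kernel weight `K_{(x̃,t̃)}(x,t)`. -/
def heatK {n : ℕ} (xt : Euc n) (tt : ℝ) (x : Euc n) (t : ℝ) : ℝ :=
  (tt - t) ^ (-(n : ℝ) / 2) * Real.exp (-‖x - xt‖ ^ 2 / (4 * (tt - t)))

/-- The localized weighted energy `E_{(x̃,t̃)}(t; φ_{x̃,r})`. -/
def energyE {n : ℕ} (Om : Set (Euc n)) (R p : ℝ) (φ : ℝ → ℝ) (u : Euc n → ℝ → ℝ)
    (xt : Euc n) (tt r t : ℝ) : ℝ :=
  (tt - t) ^ ((p + 1) / (p - 1)) *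
    ∫ x in Om ∩ ball (0 : Euc n) R,
      (‖gradient (fun y => u y t) x‖ ^ 2 / 2 - |u x t| ^ (p + 1) / (p + 1)
          + (u x t) ^ 2 / (2 * (p - 1) * (tt - t)))
        * heatK xt tt x t * (φ (‖x - xt‖ / r)) ^ 2

/-- The parabolic cylinder `Q_r(x,t) = (Om ∩ B_r(x)) × (t - r², t)`. -/
def Qcyl {n : ℕ} (Om : Set (Euc n)) (x : Euc n) (t r : ℝ) : Set (Euc n × ℝ) :=
  (Om ∩ ball x r) ×ˢ Ioo (t - r ^ 2) t

/-- The localized space-time energy `∬_{Q_δ(x₁,t₁)} (|∇u|² + |u|^{p+1}) dx dt`. -/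
def dEnergy {n : ℕ} (Om : Set (Euc n)) (p : ℝ) (u : Euc n → ℝ → ℝ)
    (x₁ : Euc n) (t₁ δ : ℝ) : ℝ :=
  ∫ t in Ioo (t₁ - δ ^ 2) t₁, ∫ x in Om ∩ ball x₁ δ,
    (‖gradient (fun y => u y t) x‖ ^ 2 + |u x t| ^ (p + 1))

/-- The quantity `I_r(x₁,t₁)`. -/
def Ir {n : ℕ} (Om : Set (Euc n)) (p : ℝ) (u : Euc n → ℝ → ℝ)
    (x₁ : Euc n) (t₁ r : ℝ) : ℝ :=
  (r / 2) ^ (4 / (p - 1) - (n : ℝ)) *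
    ∫ t in Ioo (t₁ - (r / 2) ^ 2) (t₁ - (r / 4) ^ 2), ∫ x in Om ∩ ball x₁ (r / 2),
      |u x t| ^ (p + 1)

/-- The functional `J_0(t; x₁, t₁, ρ)`. -/
def J0 {n : ℕ} (Om : Set (Euc n)) (p : ℝ) (φ : ℝ → ℝ) (u : Euc n → ℝ → ℝ)
    (t : ℝ) (x₁ : Euc n) (t₁ ρ : ℝ) : ℝ :=
  ∫ x in Om ∩ ball (0 : Euc n) ρ,
    (‖gradient (fun y => u y t) x‖ ^ 2 + |u x t| ^ (p + 1))
      * heatK x₁ t₁ x t * (φ (‖x - x₁‖ / (ρ / 8))) ^ 2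

/-- The boundary-flattening map `Φ(x) = (x', x_n - f(x'))`. -/
def PhiMap {n : ℕ} (f : Euc (n - 1) → ℝ) (x : Euc n) : Euc n :=
  glue (frontC x) (lastC x - f (frontC x))

/-- The inverse boundary-flattening map `Ψ(ξ) = (ξ', ξ_n + f(ξ'))`. -/
def PsiMap {n : ℕ} (f : Euc (n - 1) → ℝ) (ξ : Euc n) : Euc n :=
  glue (frontC ξ) (lastC ξ + f (frontC ξ))

/-- The weak `L^{q,∞}` quasinorm on a set `D`. -/
def weakLq {n : ℕ} (D : Set (Euc n)) (q : ℝ) (g : Euc n → ℝ) : ℝ≥0∞ :=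
  ⨆ l : {l : ℝ // 0 < l},
    ENNReal.ofReal l.1 * (volume {x ∈ D | l.1 < |g x|}) ^ (1 / q)

lemma cutoff_bounds {φ : ℝ → ℝ} (hφ : IsCutoff φ) {z : ℝ} (hz : 0 ≤ z) :
    0 ≤ φ z ∧ φ z ≤ 1 := by
  rcases le_or_gt z (1/2) with h | h
  · rw [hφ.2.1 z hz h]; norm_num
  rcases lt_or_ge z 1 with h1 | h1
  · exact ⟨(hφ.2.2.1 z h h1).1.le, (hφ.2.2.1 z h h1).2.le⟩
  · rw [hφ.2.2.2.1 z h1]; norm_num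

lemma indicator_measurable_of_closed {n : ℕ} {s : Set (Euc n)} (hs : IsClosed s)
    {f : Euc n → ℝ} (hf : ContinuousOn f s) : Measurable (s.indicator f) := by
  classical
  apply measurable_of_isOpen
  intro U hU
  obtain ⟨V, hV, hVeq⟩ := continuousOn_iff'.mp hf U hU
  have key : s.indicator f ⁻¹' U =
      (V ∩ s) ∪ (sᶜ ∩ (if (0:ℝ) ∈ U then Set.univ else ∅)) := by
    ext x
    by_cases hx : x ∈ s
    · simp only [Set.mem_preimage, Set.indicator_of_mem hx, Set.mem_union, Set.mem_inter_iff,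
        Set.mem_compl_iff, hx, not_true_eq_false, false_and, or_false, and_true]
      constructor
      · intro hfx
        have : x ∈ f ⁻¹' U ∩ s := ⟨hfx, hx⟩
        rw [hVeq] at this; exact this.1
      · intro hxV
        have : x ∈ V ∩ s := ⟨hxV, hx⟩
        rw [← hVeq] at this; exact this.1
    · simp only [Set.mem_preimage, Set.indicator_of_notMem hx, Set.mem_union, Set.mem_inter_iff,
        Set.mem_compl_iff, hx, not_false_eq_true, true_and, false_and, false_or]
      split_ifs with h0 <;> simp [h0]
  rw [key]
  refine (hV.measurableSet.inter hs.measurableSet).union (hs.measurableSet.compl.inter ?_)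
  split_ifs
  · exact MeasurableSet.univ
  · exact MeasurableSet.empty

set_option maxHeartbeats 2000000 in
/-- **Lemma 4.6.**  For every `Q_r(x₁,t₁) ⊆ Q_{8Aθ₀δ}`:
`I_r(x₁,t₁) ≤ C ∫_{t₁-(r/2)²}^{t₁-(r/4)²} (t₁-s)^{2/(p-1)} ∫_{Ω_R} |u|^{p+1} K_{(x₁,t₁)} φ_{x₁,R/8}² dx ds`. -/
theorem Ir_le_weighted_integral
    {n : ℕ} (hn : 3 ≤ n) {p α R M : ℝ} (hp : pS n < p) (hα : 0 < α) (hα1 : α < 1)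
    {Om : Set (Euc n)} (hdom : IsC2AlphaDomain α Om) (h0 : (0 : Euc n) ∈ closure Om)
    (hR : 0 < R) (hR' : R < 1 / 2)
    (hcase : CondR1 Om R ∨ ∃ f : Euc (n - 1) → ℝ, CondR2 Om R α f)
    (hM : 0 < M) {u : Euc n → ℝ → ℝ} (hu : LocSol Om p R M u)
    {φ : ℝ → ℝ} (hφ : IsCutoff φ)
    {A δ θ₀ : ℝ} (hA : 3 < A) (hδ : 0 < δ) (hδ' : δ < R / (16 * A))
    (hθ : 0 < θ₀) (hθ' : θ₀ < 1 / (32 * A)) :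
    ∃ C : ℝ, 0 < C ∧
      ∀ (x₁ : Euc n) (t₁ r : ℝ), 0 < r →
        Qcyl Om x₁ t₁ r ⊆ Qcyl Om 0 0 (8 * A * θ₀ * δ) →
        Ir Om p u x₁ t₁ r
          ≤ C * ∫ s in Ioo (t₁ - (r / 2) ^ 2) (t₁ - (r / 4) ^ 2),
              (t₁ - s) ^ (2 / (p - 1)) *
                ∫ x in Om ∩ ball (0 : Euc n) R,
                  |u x s| ^ (p + 1) * heatK x₁ t₁ x s * (φ (‖x - x₁‖ / (R / 8))) ^ 2 := by
  classical
  obtain ⟨hu1, hu2, hu3, hu4, hu5⟩ := hu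
  have hn3 : (3:ℝ) ≤ (n:ℝ) := by exact_mod_cast hn
  have hn2 : (0:ℝ) < (n:ℝ) - 2 := by linarith
  have hA0 : (0:ℝ) < A := by linarith
  have hp1 : 1 < p := by
    have h1 : (1:ℝ) < ((n:ℝ) + 2) / ((n:ℝ) - 2) := (one_lt_div hn2).mpr (by linarith)
    have h2 := hp; rw [pS] at h2; linarith
  have hp1' : (0:ℝ) < p - 1 := by linarith
  have hpn : ((n:ℝ) + 2) < p * ((n:ℝ) - 2) := by
    have h2 := hp; rw [pS] at h2; exact (div_lt_iff₀ hn2).mp h2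
  have hpq : p + 1 ≤ qc n p := by
    rw [qc, le_div_iff₀ (by norm_num : (0:ℝ) < 2)]
    nlinarith
  have hq0 : (0:ℝ) < qc n p := by
    rw [qc]; exact div_pos (mul_pos (by linarith) (by linarith)) (by norm_num)
  have hexpnn : (0:ℝ) ≤ 2/(p-1) := div_nonneg (by norm_num) hp1'.le
  -- basic facts about the fixed spatial domain
  have hD2m : MeasurableSet (Om ∩ ball (0:Euc n) R) := (hdom.1.inter isOpen_ball).measurableSet
  have hcomp : IsCompact (closure (Om ∩ ball (0:Euc n) R)) :=
    (Metric.isBounded_ball.subset Set.inter_subset_right).isCompact_closure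
  have hVfin : volume (Om ∩ ball (0:Euc n) R) ≠ ⊤ :=
    ((measure_mono Set.inter_subset_right).trans_lt measure_ball_lt_top).ne
  have hcont : ∀ s ∈ Ioo (-1:ℝ) 0,
      ContinuousOn (fun x => u x s) (closure (Om ∩ ball (0:Euc n) R)) :=
    fun s hs => (hu1 s hs).continuousOn
  have habs : ∀ s ∈ Ioo (-1:ℝ) 0,
      ContinuousOn (fun x => |u x s| ^ (p+1)) (closure (Om ∩ ball (0:Euc n) R)) :=
    fun s hs => ((hcont s hs).abs).rpow_const (fun x _ => Or.inr (by linarith))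
  have hintabs : ∀ s ∈ Ioo (-1:ℝ) 0,
      IntegrableOn (fun x => |u x s| ^ (p+1)) (Om ∩ ball (0:Euc n) R) :=
    fun s hs => ((habs s hs).integrableOn_compact hcomp).mono_set subset_closure
  -- a uniform Hölder bound for ∫ |u|^{p+1}
  obtain ⟨B₀, hB₀0, hHold⟩ : ∃ B₀ : ℝ, 0 ≤ B₀ ∧ ∀ s ∈ Ioo (-1:ℝ) 0,
      (∫ x in Om ∩ ball (0:Euc n) R, |u x s| ^ (p+1)) ≤ B₀ := by
    have hEnn : (0:ℝ) ≤ 1/(p+1) - 1/(qc n p) := by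
      have := one_div_le_one_div_of_le (by linarith : (0:ℝ) < p + 1) hpq
      linarith
    have hB₁ : ENNReal.ofReal M
        * (volume (Om ∩ ball (0:Euc n) R)) ^ (1/(p+1) - 1/(qc n p)) ≠ ⊤ :=
      ENNReal.mul_ne_top ENNReal.ofReal_ne_top (ENNReal.rpow_ne_top_of_nonneg hEnn hVfin)
    refine ⟨((ENNReal.ofReal M
        * (volume (Om ∩ ball (0:Euc n) R)) ^ (1/(p+1) - 1/(qc n p))) ^ (p+1)).toReal,
      ENNReal.toReal_nonneg, ?_⟩
    intro s hs
    have hfm : AEStronglyMeasurable (fun x => u x s)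
        (volume.restrict (Om ∩ ball (0:Euc n) R)) :=
      ((hcont s hs).mono subset_closure).aestronglyMeasurable hD2m
    have hcompare := eLpNorm_le_eLpNorm_mul_rpow_measure_univ
      (μ := volume.restrict (Om ∩ ball (0:Euc n) R)) (ENNReal.ofReal_le_ofReal hpq) hfm
    rw [ENNReal.toReal_ofReal (by linarith : (0:ℝ) ≤ p+1), ENNReal.toReal_ofReal hq0.le,
      Measure.restrict_apply_univ] at hcompare
    have hle : eLpNorm (fun x => u x s) (ENNReal.ofReal (p+1))
        (volume.restrict (Om ∩ ball (0:Euc n) R))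
        ≤ ENNReal.ofReal M * (volume (Om ∩ ball (0:Euc n) R)) ^ (1/(p+1) - 1/(qc n p)) :=
      hcompare.trans (mul_le_mul_left (hu5 s hs) _)
    have heq : ∫ x in Om ∩ ball (0:Euc n) R, |u x s| ^ (p+1)
        = ((eLpNorm (fun x => u x s) (ENNReal.ofReal (p+1))
            (volume.restrict (Om ∩ ball (0:Euc n) R))) ^ (p+1)).toReal := by
      rw [integral_eq_lintegral_of_nonneg_ae
        (Eventually.of_forall fun x => Real.rpow_nonneg (abs_nonneg _) _)
        (((habs s hs).mono subset_closure).aestronglyMeasurable hD2m)]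
      congr 1
      rw [eLpNorm_eq_lintegral_rpow_enorm_toReal
        (by simp only [ne_eq, ENNReal.ofReal_eq_zero, not_le]; linarith) ENNReal.ofReal_ne_top,
        ENNReal.toReal_ofReal (by linarith : (0:ℝ) ≤ p+1),
        ← ENNReal.rpow_mul, one_div_mul_cancel (by linarith : (p:ℝ)+1 ≠ 0), ENNReal.rpow_one]
      apply lintegral_congr
      intro x
      rw [Real.enorm_eq_ofReal_abs, ← ENNReal.ofReal_rpow_of_nonneg (abs_nonneg _) (by linarith)]
    rw [heq]
    exact ENNReal.toReal_mono (ENNReal.rpow_ne_top_of_nonneg (by linarith) hB₁)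
      (ENNReal.rpow_le_rpow hle (by linarith))
  refine ⟨Real.exp 1 * 2 ^ (4/(p-1)), by positivity, ?_⟩
  intro x₁ t₁ r hr hQ
  simp only [Qcyl] at hQ
  simp only [Ir]
  have hD1m : MeasurableSet (Om ∩ ball x₁ (r/2)) := (hdom.1.inter isOpen_ball).measurableSet
  by_cases hne : (Om ∩ ball x₁ r).Nonempty
  swap
  · -- the cylinder is empty: left side vanishes and the right side is nonnegative
    rw [Set.not_nonempty_iff_eq_empty] at hne
    have hsub : Om ∩ ball x₁ (r/2) ⊆ Om ∩ ball x₁ r :=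
      Set.inter_subset_inter_right Om (ball_subset_ball (by linarith))
    rw [hne] at hsub
    have hempty : Om ∩ ball x₁ (r/2) = ∅ := Set.subset_empty_iff.mp hsub
    simp only [hempty, setIntegral_empty, integral_zero, mul_zero]
    apply mul_nonneg (by positivity)
    apply setIntegral_nonneg measurableSet_Ioo
    intro s hs
    have hτ0 : (0:ℝ) < t₁ - s := by nlinarith [hs.2]
    apply mul_nonneg (Real.rpow_nonneg hτ0.le _)
    apply setIntegral_nonneg hD2m
    intro x _
    refine mul_nonneg (mul_nonneg (Real.rpow_nonneg (abs_nonneg _) _) ?_) (sq_nonneg _)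
    simp only [heatK]
    exact mul_nonneg (Real.rpow_nonneg hτ0.le _) (Real.exp_pos _).le
  obtain ⟨y, hy⟩ := hne
  have hB0 : (0:ℝ) < 8*A*θ₀*δ := mul_pos (mul_pos (mul_pos (by norm_num) hA0) hθ) hδ
  have hIoosub : Ioo (t₁ - r^2) t₁ ⊆ Ioo (0 - (8*A*θ₀*δ)^2) 0 := fun s hs =>
    (hQ (Set.mk_mem_prod hy hs)).2
  have hend := (Set.Ioo_subset_Ioo_iff (by nlinarith : t₁ - r^2 < t₁)).mp hIoosub
  have ht₁0 : t₁ ≤ 0 := hend.2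
  have htr : 0 - (8*A*θ₀*δ)^2 ≤ t₁ - r^2 := hend.1
  have hr2B : r ≤ 8*A*θ₀*δ := by nlinarith
  have hθA : θ₀ * (32*A) < 1 := (lt_div_iff₀ (by positivity)).mp hθ'
  have hδA : δ * (16*A) < R := (lt_div_iff₀ (by positivity)).mp hδ'
  have hBd4 : 8*A*θ₀*δ ≤ δ/4 := by nlinarith [mul_nonneg (sub_nonneg.mpr hθA.le) hδ.le]
  have hδR : δ < R/48 := by nlinarith [mul_pos hδ (by linarith : (0:ℝ) < A - 3)]
  have hrR8 : r ≤ R/8 := by linarith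
  have hIsub : Ioo (t₁ - (r/2)^2) (t₁ - (r/4)^2) ⊆ Ioo (-1:ℝ) 0 := by
    intro s hs
    constructor
    · nlinarith [hs.1]
    · nlinarith [hs.2]
  have hsub12 : Om ∩ ball x₁ (r/2) ⊆ Om ∩ ball (0:Euc n) R := by
    intro z hz
    have hz' : z ∈ Om ∩ ball x₁ r := ⟨hz.1, ball_subset_ball (by linarith) hz.2⟩
    have hmem := (hQ (Set.mk_mem_prod hz'
      (show t₁ - r^2/2 ∈ Ioo (t₁ - r^2) t₁ by constructor <;> nlinarith))).1
    exact ⟨hmem.1, ball_subset_ball (by linarith : 8*A*θ₀*δ ≤ R) hmem.2⟩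
  have hIccsub : ∀ τ ∈ Set.Icc (t₁ - (r/2)^2) (t₁ - (r/4)^2), τ ∈ Ioo (-1:ℝ) 0 := by
    intro τ hτ
    constructor
    · nlinarith [hτ.1]
    · nlinarith [hτ.2]
  have hab : t₁ - (r/2)^2 ≤ t₁ - (r/4)^2 := by nlinarith
  -- joint measurability via a clamped extension of u
  have hvmeas : Measurable (Function.uncurry (fun (t:ℝ) (x:Euc n) =>
      (closure (Om ∩ ball (0:Euc n) R)).indicator
        (fun z => u z (min (max t (t₁ - (r/2)^2)) (t₁ - (r/4)^2))) x)) := by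
    apply measurable_uncurry_of_continuous_of_measurable
    · intro x
      by_cases hx : x ∈ closure (Om ∩ ball (0:Euc n) R)
      · simp only [Set.indicator_of_mem hx]
        have h1 : ContinuousOn (fun τ => u x τ) (Set.Icc (t₁ - (r/2)^2) (t₁ - (r/4)^2)) :=
          fun τ hτ => ((hu2 x hx τ (hIccsub τ hτ)).continuousAt).continuousWithinAt
        exact h1.comp_continuous ((continuous_id.max continuous_const).min continuous_const)
          (fun t => ⟨le_min (le_max_right _ _) hab, min_le_right _ _⟩)
      · simp only [Set.indicator_of_notMem hx]; exact continuous_const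
    · intro t
      exact indicator_measurable_of_closed isClosed_closure
        ((hu1 _ (hIccsub _ ⟨le_min (le_max_right t _) hab, min_le_right _ _⟩)).continuousOn)
  have hFm : Measurable (fun q : ℝ × Euc n =>
      |(closure (Om ∩ ball (0:Euc n) R)).indicator
          (fun z => u z (min (max q.1 (t₁ - (r/2)^2)) (t₁ - (r/4)^2))) q.2| ^ (p+1)
        * (Real.exp (Real.log (max (t₁ - q.1) ((r/4)^2)) * (-(n:ℝ)/2))
            * Real.exp (-‖q.2 - x₁‖^2 / (4*(t₁ - q.1))))
        * (φ (‖q.2 - x₁‖/(R/8)))^2) := by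
    have hm1 : Measurable (fun q : ℝ × Euc n =>
        |(closure (Om ∩ ball (0:Euc n) R)).indicator
            (fun z => u z (min (max q.1 (t₁ - (r/2)^2)) (t₁ - (r/4)^2))) q.2| ^ (p+1)) :=
      (Real.continuous_rpow_const (by linarith : (0:ℝ) ≤ p+1)).measurable.comp hvmeas.abs
    have hm2 : Continuous (fun q : ℝ × Euc n =>
        Real.exp (Real.log (max (t₁ - q.1) ((r/4)^2)) * (-(n:ℝ)/2))) := by
      apply Real.continuous_exp.comp
      apply Continuous.mul _ continuous_const
      apply Continuous.log ((continuous_const.sub continuous_fst).max continuous_const)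
      intro q
      have hpos : (0:ℝ) < (r/4)^2 := by positivity
      exact (lt_of_lt_of_le hpos (le_max_right _ _)).ne'
    have hm3 : Measurable (fun q : ℝ × Euc n =>
        Real.exp (-‖q.2 - x₁‖^2 / (4*(t₁ - q.1)))) := by
      apply Measurable.exp
      exact (((continuous_snd.sub continuous_const).norm.pow 2).neg.measurable.div
        (continuous_const.mul (continuous_const.sub continuous_fst)).measurable)
    have hm4 : Continuous (fun q : ℝ × Euc n => (φ (‖q.2 - x₁‖/(R/8)))^2) :=
      (hφ.1.continuous.comp (((continuous_snd.sub continuous_const).norm).div_const _)).pow 2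
    exact (hm1.mul (hm2.measurable.mul hm3)).mul hm4.measurable
  have hGm : StronglyMeasurable (fun s : ℝ => ∫ x in Om ∩ ball (0:Euc n) R,
      (|(closure (Om ∩ ball (0:Euc n) R)).indicator
          (fun z => u z (min (max s (t₁ - (r/2)^2)) (t₁ - (r/4)^2))) x| ^ (p+1)
        * (Real.exp (Real.log (max (t₁ - s) ((r/4)^2)) * (-(n:ℝ)/2))
            * Real.exp (-‖x - x₁‖^2 / (4*(t₁ - s))))
        * (φ (‖x - x₁‖/(R/8)))^2)) :=
    hFm.stronglyMeasurable.integral_prod_right'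
  have hcongr : ∀ s ∈ Ioo (t₁ - (r/2)^2) (t₁ - (r/4)^2),
      (∫ x in Om ∩ ball (0:Euc n) R,
          |u x s| ^ (p+1) * heatK x₁ t₁ x s * (φ (‖x - x₁‖/(R/8)))^2)
        = ∫ x in Om ∩ ball (0:Euc n) R,
          (|(closure (Om ∩ ball (0:Euc n) R)).indicator
              (fun z => u z (min (max s (t₁ - (r/2)^2)) (t₁ - (r/4)^2))) x| ^ (p+1)
            * (Real.exp (Real.log (max (t₁ - s) ((r/4)^2)) * (-(n:ℝ)/2))
                * Real.exp (-‖x - x₁‖^2 / (4*(t₁ - s))))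
            * (φ (‖x - x₁‖/(R/8)))^2) := by
    intro s hs
    apply setIntegral_congr_fun hD2m
    intro x hx
    have hclamp : min (max s (t₁ - (r/2)^2)) (t₁ - (r/4)^2) = s := by
      rw [max_eq_left hs.1.le, min_eq_left hs.2.le]
    have hτ : (r/4)^2 ≤ t₁ - s := by nlinarith [hs.2]
    have hτ0 : (0:ℝ) < t₁ - s := by nlinarith [hs.2]
    simp only [heatK, Set.indicator_of_mem (subset_closure hx), hclamp,
      max_eq_left hτ, ← Real.rpow_def_of_pos hτ0]
  have hφcont : Continuous (fun x : Euc n => (φ (‖x - x₁‖/(R/8)))^2) :=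
    (hφ.1.continuous.comp (((continuous_id.sub continuous_const).norm).div_const _)).pow 2
  have hKcont : ∀ s : ℝ, Continuous (fun x : Euc n => heatK x₁ t₁ x s) := by
    intro s
    simp only [heatK]
    exact continuous_const.mul
      (Real.continuous_exp.comp ((((continuous_id.sub continuous_const).norm.pow 2).neg).div_const _))
  have hIntegrand : ∀ s ∈ Ioo (-1:ℝ) 0,
      IntegrableOn (fun x => |u x s| ^ (p+1) * heatK x₁ t₁ x s * (φ (‖x - x₁‖/(R/8)))^2)
        (Om ∩ ball (0:Euc n) R) := by
    intro s hs
    apply IntegrableOn.mono_set _ subset_closure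
    apply ContinuousOn.integrableOn_compact hcomp
    exact ((habs s hs).mul (hKcont s).continuousOn).mul hφcont.continuousOn
  -- the key pointwise estimate
  have hkey : ∀ s ∈ Ioo (t₁ - (r/2)^2) (t₁ - (r/4)^2), ∀ x ∈ Om ∩ ball x₁ (r/2),
      (r/2) ^ (4/(p-1) - (n:ℝ)) * |u x s| ^ (p+1)
        ≤ (Real.exp 1 * 2 ^ (4/(p-1)) * (t₁ - s) ^ (2/(p-1)))
            * (|u x s| ^ (p+1) * heatK x₁ t₁ x s * (φ (‖x - x₁‖/(R/8)))^2) := by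
    intro s hs x hx
    have hτ1 : (r/4)^2 < t₁ - s := by nlinarith [hs.2]
    have hτ2 : t₁ - s < (r/2)^2 := by nlinarith [hs.1]
    have hτ0 : (0:ℝ) < t₁ - s := lt_trans (by positivity) hτ1
    have hxd : ‖x - x₁‖ < r/2 := by
      have h := hx.2; rwa [mem_ball, dist_eq_norm] at h
    have hφ1 : φ (‖x - x₁‖/(R/8)) = 1 := by
      apply hφ.2.1 _ (by positivity)
      rw [div_le_iff₀ (by linarith : (0:ℝ) < R/8)]
      nlinarith [norm_nonneg (x - x₁)]
    rw [hφ1, one_pow, mul_one]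
    simp only [heatK]
    have h₁ : (r/4) ^ (4/(p-1)) ≤ (t₁ - s) ^ (2/(p-1)) := by
      have e : ((r/4):ℝ) ^ (4/(p-1)) = (((r/4):ℝ)^2) ^ (2/(p-1)) := by
        rw [← Real.rpow_natCast (r/4) 2, ← Real.rpow_mul (by positivity)]
        congr 1
        push_cast; ring
      rw [e]
      exact Real.rpow_le_rpow (by positivity) hτ1.le hexpnn
    have h₂ : (r/2) ^ (-(n:ℝ)) ≤ (t₁ - s) ^ (-(n:ℝ)/2) := by
      have e : ((r/2):ℝ) ^ (-(n:ℝ)) = (((r/2):ℝ)^2) ^ (-(n:ℝ)/2) := by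
        rw [← Real.rpow_natCast (r/2) 2, ← Real.rpow_mul (by positivity)]
        congr 1
        push_cast; ring
      rw [e]
      apply Real.rpow_le_rpow_of_nonpos hτ0 hτ2.le
      have hnn : (0:ℝ) ≤ (n:ℝ)/2 := by positivity
      linarith
    have h₃ : Real.exp (-1) ≤ Real.exp (-‖x - x₁‖^2 / (4*(t₁ - s))) := by
      apply Real.exp_le_exp.mpr
      rw [neg_div]
      apply neg_le_neg
      rw [div_le_one (by linarith)]
      nlinarith [norm_nonneg (x - x₁), hxd, hτ1]
    have hw : (0:ℝ) ≤ |u x s| ^ (p+1) := Real.rpow_nonneg (abs_nonneg _) _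
    have e1 : (2:ℝ) ^ (4/(p-1)) * (r/4) ^ (4/(p-1)) = (r/2) ^ (4/(p-1)) := by
      rw [← Real.mul_rpow (by norm_num) (by positivity)]
      congr 1
      ring
    have e2 : Real.exp 1 * Real.exp (-1) = 1 := by
      rw [← Real.exp_add, add_neg_cancel, Real.exp_zero]
    have e3 : (r/2) ^ (4/(p-1)) * (r/2) ^ (-(n:ℝ)) = (r/2) ^ (4/(p-1) - (n:ℝ)) := by
      rw [← Real.rpow_add (by positivity)]
      congr 1 <;> ring
    have hEq : (r/2) ^ (4/(p-1) - (n:ℝ))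
        = (Real.exp 1 * 2 ^ (4/(p-1))) * ((r/4) ^ (4/(p-1)) * ((r/2) ^ (-(n:ℝ)) * Real.exp (-1))) := by
      calc (r/2) ^ (4/(p-1) - (n:ℝ))
          = (Real.exp 1 * Real.exp (-1))
              * (((2:ℝ) ^ (4/(p-1)) * (r/4) ^ (4/(p-1))) * (r/2) ^ (-(n:ℝ))) := by
            rw [e2, e1, e3, one_mul]
        _ = (Real.exp 1 * 2 ^ (4/(p-1)))
              * ((r/4) ^ (4/(p-1)) * ((r/2) ^ (-(n:ℝ)) * Real.exp (-1))) := by ring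
    have hscalar : (r/2) ^ (4/(p-1) - (n:ℝ))
        ≤ (Real.exp 1 * 2 ^ (4/(p-1)) * (t₁ - s) ^ (2/(p-1)))
            * ((t₁ - s) ^ (-(n:ℝ)/2) * Real.exp (-‖x - x₁‖^2 / (4*(t₁ - s)))) := by
      rw [hEq]
      have step : (r/4) ^ (4/(p-1)) * ((r/2) ^ (-(n:ℝ)) * Real.exp (-1))
          ≤ (t₁ - s) ^ (2/(p-1))
              * ((t₁ - s) ^ (-(n:ℝ)/2) * Real.exp (-‖x - x₁‖^2 / (4*(t₁ - s)))) :=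
        mul_le_mul h₁
          (mul_le_mul h₂ h₃ (Real.exp_pos _).le (Real.rpow_nonneg hτ0.le _))
          (mul_nonneg (Real.rpow_nonneg (by positivity) _) (Real.exp_pos _).le)
          (Real.rpow_nonneg hτ0.le _)
      calc (Real.exp 1 * 2 ^ (4/(p-1)))
            * ((r/4) ^ (4/(p-1)) * ((r/2) ^ (-(n:ℝ)) * Real.exp (-1)))
          ≤ (Real.exp 1 * 2 ^ (4/(p-1)))
              * ((t₁ - s) ^ (2/(p-1))
                * ((t₁ - s) ^ (-(n:ℝ)/2) * Real.exp (-‖x - x₁‖^2 / (4*(t₁ - s))))) :=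
            mul_le_mul_of_nonneg_left step (by positivity)
        _ = _ := by ring
    calc (r/2) ^ (4/(p-1) - (n:ℝ)) * |u x s| ^ (p+1)
        ≤ ((Real.exp 1 * 2 ^ (4/(p-1)) * (t₁ - s) ^ (2/(p-1)))
            * ((t₁ - s) ^ (-(n:ℝ)/2) * Real.exp (-‖x - x₁‖^2 / (4*(t₁ - s)))))
              * |u x s| ^ (p+1) :=
          mul_le_mul_of_nonneg_right hscalar hw
      _ = (Real.exp 1 * 2 ^ (4/(p-1)) * (t₁ - s) ^ (2/(p-1)))
            * (|u x s| ^ (p+1)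
              * ((t₁ - s) ^ (-(n:ℝ)/2) * Real.exp (-‖x - x₁‖^2 / (4*(t₁ - s))))) := by ring
  -- the inner (spatial) comparison, for each fixed time
  have hstep : ∀ s ∈ Ioo (t₁ - (r/2)^2) (t₁ - (r/4)^2),
      (r/2) ^ (4/(p-1) - (n:ℝ)) * ∫ x in Om ∩ ball x₁ (r/2), |u x s| ^ (p+1)
        ≤ Real.exp 1 * 2 ^ (4/(p-1))
            * ((t₁ - s) ^ (2/(p-1)) * ∫ x in Om ∩ ball (0:Euc n) R,
                |u x s| ^ (p+1) * heatK x₁ t₁ x s * (φ (‖x - x₁‖/(R/8)))^2) := by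
    intro s hs
    have hs0 : s ∈ Ioo (-1:ℝ) 0 := hIsub hs
    have hτ0 : (0:ℝ) < t₁ - s := by nlinarith [hs.2]
    have hint2 : IntegrableOn (fun x =>
        (Real.exp 1 * 2 ^ (4/(p-1)) * (t₁ - s) ^ (2/(p-1)))
          * (|u x s| ^ (p+1) * heatK x₁ t₁ x s * (φ (‖x - x₁‖/(R/8)))^2))
        (Om ∩ ball (0:Euc n) R) := (hIntegrand s hs0).const_mul _
    have hnn : ∀ x : Euc n, 0 ≤ (Real.exp 1 * 2 ^ (4/(p-1)) * (t₁ - s) ^ (2/(p-1)))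
          * (|u x s| ^ (p+1) * heatK x₁ t₁ x s * (φ (‖x - x₁‖/(R/8)))^2) := by
      intro x
      have hK : 0 ≤ heatK x₁ t₁ x s := by
        simp only [heatK]
        exact mul_nonneg (Real.rpow_nonneg hτ0.le _) (Real.exp_pos _).le
      exact mul_nonneg (mul_nonneg (by positivity) (Real.rpow_nonneg hτ0.le _))
        (mul_nonneg (mul_nonneg (Real.rpow_nonneg (abs_nonneg _) _) hK) (sq_nonneg _))
    calc (r/2) ^ (4/(p-1) - (n:ℝ)) * ∫ x in Om ∩ ball x₁ (r/2), |u x s| ^ (p+1)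
        = ∫ x in Om ∩ ball x₁ (r/2), (r/2) ^ (4/(p-1) - (n:ℝ)) * |u x s| ^ (p+1) :=
          (integral_const_mul _ _).symm
      _ ≤ ∫ x in Om ∩ ball x₁ (r/2),
            (Real.exp 1 * 2 ^ (4/(p-1)) * (t₁ - s) ^ (2/(p-1)))
              * (|u x s| ^ (p+1) * heatK x₁ t₁ x s * (φ (‖x - x₁‖/(R/8)))^2) :=
          setIntegral_mono_on (((hintabs s hs0).mono_set hsub12).const_mul _)
            (hint2.mono_set hsub12) hD1m (fun x hx => hkey s hs x hx)
      _ ≤ ∫ x in Om ∩ ball (0:Euc n) R,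
            (Real.exp 1 * 2 ^ (4/(p-1)) * (t₁ - s) ^ (2/(p-1)))
              * (|u x s| ^ (p+1) * heatK x₁ t₁ x s * (φ (‖x - x₁‖/(R/8)))^2) :=
          setIntegral_mono_set hint2 (Eventually.of_forall hnn)
            (HasSubset.Subset.eventuallyLE hsub12)
      _ = _ := by rw [integral_const_mul]; ring
  -- combine over time
  rw [← integral_const_mul ((r/2) ^ (4/(p-1) - (n:ℝ))),
    ← integral_const_mul (Real.exp 1 * 2 ^ (4/(p-1)))]
  apply integral_mono_of_nonneg
  · exact Eventually.of_forall fun s => mul_nonneg (Real.rpow_nonneg (by positivity) _)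
      (setIntegral_nonneg hD1m fun x _ => Real.rpow_nonneg (abs_nonneg _) _)
  · apply Integrable.const_mul
    apply Integrable.mono'
      (g := fun _ => ((r/2)^2) ^ (2/(p-1)) * (((r/4)^2) ^ (-(n:ℝ)/2) * B₀))
      (integrableOn_const (by rw [Real.volume_Ioo]; exact ENNReal.ofReal_ne_top))
    · apply AEStronglyMeasurable.congr
        (f := fun s => (t₁ - s) ^ (2/(p-1)) * ∫ x in Om ∩ ball (0:Euc n) R,
          (|(closure (Om ∩ ball (0:Euc n) R)).indicator
              (fun z => u z (min (max s (t₁ - (r/2)^2)) (t₁ - (r/4)^2))) x| ^ (p+1)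
            * (Real.exp (Real.log (max (t₁ - s) ((r/4)^2)) * (-(n:ℝ)/2))
                * Real.exp (-‖x - x₁‖^2 / (4*(t₁ - s))))
            * (φ (‖x - x₁‖/(R/8)))^2))
      · exact (((Real.continuous_rpow_const hexpnn).comp
          (continuous_const.sub continuous_id)).aestronglyMeasurable).mul
          hGm.aestronglyMeasurable
      · exact (ae_restrict_iff' measurableSet_Ioo).mpr
          (Eventually.of_forall fun s hs => by dsimp only; rw [hcongr s hs])
    · refine (ae_restrict_iff' measurableSet_Ioo).mpr (Eventually.of_forall fun s hs => ?_)
      have hs0 : s ∈ Ioo (-1:ℝ) 0 := hIsub hs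
      have hτ1 : (r/4)^2 < t₁ - s := by nlinarith [hs.2]
      have hτ2 : t₁ - s < (r/2)^2 := by nlinarith [hs.1]
      have hτ0 : (0:ℝ) < t₁ - s := lt_trans (by positivity) hτ1
      have hKnn : ∀ x : Euc n, 0 ≤ heatK x₁ t₁ x s := fun x => by
        simp only [heatK]
        exact mul_nonneg (Real.rpow_nonneg hτ0.le _) (Real.exp_pos _).le
      have hKle : ∀ x : Euc n, heatK x₁ t₁ x s ≤ (t₁ - s) ^ (-(n:ℝ)/2) := by
        intro x
        simp only [heatK]
        apply mul_le_of_le_one_right (Real.rpow_nonneg hτ0.le _)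
        rw [Real.exp_le_one_iff]
        exact div_nonpos_of_nonpos_of_nonneg (neg_nonpos.mpr (by positivity)) (by linarith)
      have hJnn : 0 ≤ ∫ x in Om ∩ ball (0:Euc n) R,
          |u x s| ^ (p+1) * heatK x₁ t₁ x s * (φ (‖x - x₁‖/(R/8)))^2 :=
        setIntegral_nonneg hD2m fun x _ =>
          mul_nonneg (mul_nonneg (Real.rpow_nonneg (abs_nonneg _) _) (hKnn x)) (sq_nonneg _)
      have hintnn : 0 ≤ ∫ x in Om ∩ ball (0:Euc n) R, |u x s| ^ (p+1) :=
        setIntegral_nonneg hD2m fun x _ => Real.rpow_nonneg (abs_nonneg _) _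
      have hJle : (∫ x in Om ∩ ball (0:Euc n) R,
            |u x s| ^ (p+1) * heatK x₁ t₁ x s * (φ (‖x - x₁‖/(R/8)))^2)
          ≤ (t₁ - s) ^ (-(n:ℝ)/2) * ∫ x in Om ∩ ball (0:Euc n) R, |u x s| ^ (p+1) := by
        rw [← integral_const_mul]
        apply setIntegral_mono_on (hIntegrand s hs0) ((hintabs s hs0).const_mul _) hD2m
        intro x hx
        have h01 := cutoff_bounds hφ (div_nonneg (norm_nonneg (x - x₁)) (by linarith : (0:ℝ) ≤ R/8))
        have hφle : (φ (‖x - x₁‖/(R/8)))^2 ≤ 1 := by nlinarith [h01.1, h01.2]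
        have hw : (0:ℝ) ≤ |u x s| ^ (p+1) := Real.rpow_nonneg (abs_nonneg _) _
        calc |u x s| ^ (p+1) * heatK x₁ t₁ x s * (φ (‖x - x₁‖/(R/8)))^2
            ≤ |u x s| ^ (p+1) * heatK x₁ t₁ x s * 1 :=
              mul_le_mul_of_nonneg_left hφle (mul_nonneg hw (hKnn x))
          _ = |u x s| ^ (p+1) * heatK x₁ t₁ x s := mul_one _
          _ ≤ |u x s| ^ (p+1) * (t₁ - s) ^ (-(n:ℝ)/2) :=
              mul_le_mul_of_nonneg_left (hKle x) hw
          _ = (t₁ - s) ^ (-(n:ℝ)/2) * |u x s| ^ (p+1) := mul_comm _ _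
      have hbnd1 : (t₁ - s) ^ (-(n:ℝ)/2) ≤ ((r/4)^2) ^ (-(n:ℝ)/2) := by
        apply Real.rpow_le_rpow_of_nonpos (by positivity) hτ1.le
        have hnn : (0:ℝ) ≤ (n:ℝ)/2 := by positivity
        linarith
      have hbnd2 : (t₁ - s) ^ (2/(p-1)) ≤ ((r/2)^2) ^ (2/(p-1)) :=
        Real.rpow_le_rpow hτ0.le hτ2.le hexpnn
      have hHs := hHold s hs0
      rw [Real.norm_of_nonneg (mul_nonneg (Real.rpow_nonneg hτ0.le _) hJnn)]
      calc (t₁ - s) ^ (2/(p-1)) * ∫ x in Om ∩ ball (0:Euc n) R,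
            |u x s| ^ (p+1) * heatK x₁ t₁ x s * (φ (‖x - x₁‖/(R/8)))^2
          ≤ (t₁ - s) ^ (2/(p-1))
              * ((t₁ - s) ^ (-(n:ℝ)/2) * ∫ x in Om ∩ ball (0:Euc n) R, |u x s| ^ (p+1)) :=
            mul_le_mul_of_nonneg_left hJle (Real.rpow_nonneg hτ0.le _)
        _ ≤ ((r/2)^2) ^ (2/(p-1)) * (((r/4)^2) ^ (-(n:ℝ)/2) * B₀) := by
            apply mul_le_mul hbnd2 ?_ ?_ (by positivity)
            · exact mul_le_mul hbnd1 hHs hintnn (Real.rpow_nonneg (by positivity) _)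
            · exact mul_nonneg (Real.rpow_nonneg hτ0.le _) hintnn
  · exact (ae_restrict_iff' measurableSet_Ioo).mpr
      (Eventually.of_forall fun s hs => hstep s hs)
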